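/- Let π be a probability measure on 𝕊^d = {w ∈ ℝ^{d+1} : ‖w‖₁ = 1} and let a : 𝕊^d → ℝ be measurable with ∫_{𝕊^d} |a(w)|² dπ(w) < ∞. Define f : X → ℝ by f(x) = ∫_{𝕊^d} a(w) σ(wᵀx̃) dπ(w). Then f admits a Barron representation ρ with ∫_Ω |a|²·(‖b‖₁ + |c|)² dρ(a,b,c) ≤ ∫_{𝕊^d} |a(w)|² dπ(w). (This is the inclusion of the RKHS induced by the kernel k_π(x,x') = E_{w∼π}[σ(wᵀx̃)σ(wᵀx̃')] into the Barron space B₂.) -/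

import Mathlib

open MeasureTheory

noncomputable section

/-- ReLU activation. -/
def relu (t : ℝ) : ℝ := max t 0

/-- The cube `X = [0,1]^d`. -/
def cube (d : ℕ) : Set (Fin d → ℝ) := Set.Icc 0 1

/-- ℓ¹ norm on `ℝ^d`. -/
def l1norm {d : ℕ} (b : Fin d → ℝ) : ℝ := ∑ i, |b i|

/-- The neuron `(a,b,c) ↦ a · σ(bᵀx + c)`. -/
def act {d : ℕ} (x : Fin d → ℝ) (p : ℝ × (Fin d → ℝ) × ℝ) : ℝ :=
  p.1 * relu ((∑ i, p.2.1 i * x i) + p.2.2)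

/-- `ρ` is a Barron representation of `f : X → ℝ`. -/
def IsBarronRep {d : ℕ} (f : (Fin d → ℝ) → ℝ)
    (ρ : Measure (ℝ × (Fin d → ℝ) × ℝ)) : Prop :=
  IsProbabilityMeasure ρ ∧
    ∀ x ∈ cube d, Integrable (act x) ρ ∧ f x = ∫ p, act x p ∂ρ

/-- The weight `|a| · (‖b‖₁ + |c|)`. -/
def wt {d : ℕ} (p : ℝ × (Fin d → ℝ) × ℝ) : ℝ := |p.1| * (l1norm p.2.1 + |p.2.2|)


/-- `wᵀx̃` for `w ∈ ℝ^{d+1}`, `x̃ = (x,1)`. -/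
def actS {d : ℕ} (x : Fin d → ℝ) (w : Fin (d + 1) → ℝ) : ℝ :=
  (∑ i : Fin d, w i.castSucc * x i) + w (Fin.last d)

/-!
Push `π` forward along `w ↦ (a w, (w₁, …, w_d), w_{d+1})`. The neuron with these parameters is
`a(w) σ(wᵀx̃)`, so the image measure represents `f`, and its weight is `|a(w)| ‖w‖₁ = |a(w)|` on the
sphere, so the second moment of the weight is exactly `∫ a² dπ`.
-/

theorem measurable_act {d : ℕ} (x : Fin d → ℝ) : Measurable (act x) := by
  unfold act relu
  fun_prop

theorem measurable_wt {d : ℕ} : Measurable (wt (d := d)) := by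
  unfold wt l1norm
  fun_prop

theorem isBarronRep_map {α : Type*} [MeasurableSpace α] {d : ℕ} {f : (Fin d → ℝ) → ℝ}
    {μ : Measure α} [IsProbabilityMeasure μ] {T : α → ℝ × (Fin d → ℝ) × ℝ} (hT : Measurable T)
    (hint : ∀ x ∈ cube d, Integrable (fun w => act x (T w)) μ)
    (hf : ∀ x ∈ cube d, f x = ∫ w, act x (T w) ∂μ) :
    IsBarronRep f (μ.map T) := by
  refine ⟨Measure.isProbabilityMeasure_map hT.aemeasurable, fun x hx => ⟨?_, ?_⟩⟩
  · exact (integrable_map_measure (measurable_act x).aestronglyMeasurable hT.aemeasurable).2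
      (hint x hx)
  · rw [integral_map hT.aemeasurable (measurable_act x).aestronglyMeasurable]
    exact hf x hx

theorem l1norm_castSucc_add_last {d : ℕ} (w : Fin (d + 1) → ℝ) :
    l1norm (fun i : Fin d => w i.castSucc) + |w (Fin.last d)| = l1norm w := by
  simp [l1norm, Fin.sum_univ_castSucc]

def neuronParams {d : ℕ} (a : (Fin (d + 1) → ℝ) → ℝ) (w : Fin (d + 1) → ℝ) :
    ℝ × (Fin d → ℝ) × ℝ :=
  (a w, fun i => w i.castSucc, w (Fin.last d))

section neuronParams

variable {d : ℕ} {a : (Fin (d + 1) → ℝ) → ℝ}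

theorem measurable_neuronParams (ha : Measurable a) : Measurable (neuronParams a) := by
  unfold neuronParams
  fun_prop

theorem act_neuronParams (x : Fin d → ℝ) (w : Fin (d + 1) → ℝ) :
    act x (neuronParams a w) = a w * relu (actS x w) :=
  rfl

theorem wt_neuronParams (w : Fin (d + 1) → ℝ) :
    wt (neuronParams a w) = |a w| * l1norm w := by
  rw [← l1norm_castSucc_add_last]
  rfl

theorem wt_neuronParams_sq_ae_eq {π : Measure (Fin (d + 1) → ℝ)}
    (hsphere : ∀ᵐ w ∂π, l1norm w = 1) :
    (fun w => wt (neuronParams a w) ^ 2) =ᵐ[π] fun w => a w ^ 2 := by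
  filter_upwards [hsphere] with w hw
  rw [wt_neuronParams, hw, mul_one, sq_abs]

end neuronParams

theorem rkhs_subset_barron_general {d : ℕ}
    (π : Measure (Fin (d + 1) → ℝ)) (hπ : IsProbabilityMeasure π)
    (hsphere : ∀ᵐ w ∂π, l1norm w = 1)
    (a : (Fin (d + 1) → ℝ) → ℝ) (ha : Measurable a)
    (ha2 : Integrable (fun w => a w ^ 2) π)
    (f : (Fin d → ℝ) → ℝ)
    (hfint : ∀ x ∈ cube d, Integrable (fun w => a w * relu (actS x w)) π)
    (hf : ∀ x ∈ cube d, f x = ∫ w, a w * relu (actS x w) ∂π) :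
    ∃ ρ : Measure (ℝ × (Fin d → ℝ) × ℝ),
      IsBarronRep f ρ ∧ Integrable (fun p => wt p ^ 2) ρ ∧
        ∫ p, wt p ^ 2 ∂ρ ≤ ∫ w, a w ^ 2 ∂π := by
  have hT := measurable_neuronParams ha
  have hwt2 : Measurable fun p : ℝ × (Fin d → ℝ) × ℝ => wt p ^ 2 := measurable_wt.pow_const 2
  have hmoment := wt_neuronParams_sq_ae_eq (a := a) hsphere
  simp_rw [← act_neuronParams (a := a)] at hfint hf
  refine ⟨π.map (neuronParams a), isBarronRep_map hT hfint hf, ?_, ?_⟩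
  · rw [integrable_map_measure hwt2.aestronglyMeasurable hT.aemeasurable]
    exact ha2.congr hmoment.symm
  · rw [integral_map hT.aemeasurable hwt2.aestronglyMeasurable]
    exact (integral_congr_ae hmoment).le

/-- every function in the RKHS `H_{k_π}` belongs to the Barron space `B₂`. -/
theorem rkhs_subset_barron {d : ℕ} (hd : 1 ≤ d)
    (π : Measure (Fin (d + 1) → ℝ)) (hπ : IsProbabilityMeasure π)
    (hsphere : ∀ᵐ w ∂π, l1norm w = 1)
    (a : (Fin (d + 1) → ℝ) → ℝ) (ha : Measurable a)
    (ha2 : Integrable (fun w => a w ^ 2) π)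
    (f : (Fin d → ℝ) → ℝ)
    (hfint : ∀ x ∈ cube d, Integrable (fun w => a w * relu (actS x w)) π)
    (hf : ∀ x ∈ cube d, f x = ∫ w, a w * relu (actS x w) ∂π) :
    ∃ ρ : Measure (ℝ × (Fin d → ℝ) × ℝ),
      IsBarronRep f ρ ∧ Integrable (fun p => wt p ^ 2) ρ ∧
        ∫ p, wt p ^ 2 ∂ρ ≤ ∫ w, a w ^ 2 ∂π :=
  rkhs_subset_barron_general π hπ hsphere a ha ha2 f hfint hf
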